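/- arXiv:2104.14666 — 6 statements merged into one kernel-verified Lean document; each statement's English description precedes it below -/
import Mathlib

section
/- Let η ∈ ℝ, let I : ℝ → ℝ be continuous, and let θ : (t₁,t₂) → ℝ be differentiable with θ'(t) = 1 − cos θ(t) + (1 + cos θ(t))·(η + I(t)) and cos θ(t) ≠ −1 for all t ∈ (t₁,t₂). Then the function V(t) := tan(θ(t)/2) is differentiable on (t₁,t₂) and satisfies V'(t) = η + I(t) + V(t)². (A theta neuron is equivalent under V = tan(θ/2) to a quadratic integrate-and-fire neuron.) -/
open Real

theorem Real.cos_half_ne_zero_of_cos_ne_neg_one {x : ℝ} (h : cos x ≠ -1) : cos (x / 2) ≠ 0 := by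
  intro h0
  apply h
  rw [← mul_div_cancel₀ x two_ne_zero, cos_two_mul, h0]
  ring

theorem Real.hasDerivAt_tan_half {f : ℝ → ℝ} {f' t : ℝ} (hf : HasDerivAt f f' t)
    (h : cos (f t) ≠ -1) :
    HasDerivAt (fun s => tan (f s / 2)) ((1 + tan (f t / 2) ^ 2) * (f' / 2)) t := by
  have hcos := cos_half_ne_zero_of_cos_ne_neg_one h
  have htan := hasDerivAt_tan hcos
  rw [one_div, ← inv_one_add_tan_sq hcos, inv_inv] at htan
  exact htan.comp t (hf.div_const 2)

-- Substitute `cos x = (1 - T²) / (1 + T²)` with `T = tan (x / 2)`.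
theorem Real.one_add_tan_half_sq_mul_theta_field {x : ℝ} (h : cos x ≠ -1) (a : ℝ) :
    (1 + tan (x / 2) ^ 2) * ((1 - cos x + (1 + cos x) * a) / 2) = a + tan (x / 2) ^ 2 := by
  rw [cos_eq_two_mul_tan_half_div_one_sub_tan_half_sq x h]
  field_simp
  ring

theorem theta_to_qif_general (η t₁ t₂ : ℝ) (I : ℝ → ℝ)
    (θ : ℝ → ℝ)
    (hθ : ∀ t ∈ Set.Ioo t₁ t₂,
      HasDerivAt θ (1 - Real.cos (θ t) + (1 + Real.cos (θ t)) * (η + I t)) t)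
    (hcos : ∀ t ∈ Set.Ioo t₁ t₂, Real.cos (θ t) ≠ -1) :
    ∀ t ∈ Set.Ioo t₁ t₂,
      HasDerivAt (fun s => Real.tan (θ s / 2))
        (η + I t + (Real.tan (θ t / 2)) ^ 2) t := by
  intro t ht
  have hV := hasDerivAt_tan_half (hθ t ht) (hcos t ht)
  rwa [one_add_tan_half_sq_mul_theta_field (hcos t ht)] at hV

/-- A theta neuron `θ' = 1 - cos θ + (1 + cos θ)(η + I(t))` with `cos θ ≠ -1`
is equivalent under `V = tan(θ/2)` to a quadratic integrate-and-fire neuron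
`V' = η + I(t) + V²`. -/
theorem theta_to_qif (η t₁ t₂ : ℝ) (I : ℝ → ℝ) (hI : Continuous I)
    (θ : ℝ → ℝ)
    (hθ : ∀ t ∈ Set.Ioo t₁ t₂,
      HasDerivAt θ (1 - Real.cos (θ t) + (1 + Real.cos (θ t)) * (η + I t)) t)
    (hcos : ∀ t ∈ Set.Ioo t₁ t₂, Real.cos (θ t) ≠ -1) :
    ∀ t ∈ Set.Ioo t₁ t₂,
      HasDerivAt (fun s => Real.tan (θ s / 2))
        (η + I t + (Real.tan (θ t / 2)) ^ 2) t :=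
  theta_to_qif_general η t₁ t₂ I θ hθ hcos
end

section
/- Let a > 0 and let θ : ℝ → ℝ be a (global) solution of θ'(t) = 1 − cos θ(t) + (1 + cos θ(t))·a. Then for all t ∈ ℝ, θ(t + π/√a) = θ(t) + 2π. (Every theta neuron trajectory with constant positive input a advances by exactly one full revolution in time π/√a, i.e. it fires with frequency √a/π.) -/
/-!
With `s = √a`, the function `thetaTime s` below is an antiderivative of `1 / f_a` on all of `ℝ`,
so `thetaTime s (θ t) - t` is constant along any solution. Since `thetaTime s` is strictly
increasing and `thetaTime s (x + 2π) = thetaTime s x + π / s`, advancing the time by `π / s`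
must advance the phase by exactly `2π`.
-/

open Real

section AutonomousODE

variable {f G θ : ℝ → ℝ}

theorem comp_sub_eq_of_hasDerivAt_inv (hf : ∀ x, f x ≠ 0) (hG : ∀ x, HasDerivAt G (f x)⁻¹ x)
    (hθ : ∀ t, HasDerivAt θ (f (θ t)) t) (t₀ t : ℝ) : G (θ t) - t = G (θ t₀) - t₀ := by
  have hderiv : ∀ t, HasDerivAt (fun t ↦ G (θ t) - t) 0 t := fun t ↦ by
    have := ((hG (θ t)).comp t (hθ t)).sub (hasDerivAt_id' t)
    rwa [inv_mul_cancel₀ (hf (θ t)), sub_self] at this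
  exact is_const_of_deriv_eq_zero (fun t ↦ (hderiv t).differentiableAt)
    (fun t ↦ (hderiv t).deriv) t t₀

theorem apply_add_eq_add_of_hasDerivAt_inv {p T : ℝ} (hf : ∀ x, 0 < f x)
    (hG : ∀ x, HasDerivAt G (f x)⁻¹ x) (hGp : ∀ x, G (x + p) = G x + T)
    (hθ : ∀ t, HasDerivAt θ (f (θ t)) t) (t : ℝ) : θ (t + T) = θ t + p := by
  refine (strictMono_of_hasDerivAt_pos hG fun x ↦ inv_pos.mpr (hf x)).injective ?_
  have := comp_sub_eq_of_hasDerivAt_inv (fun x ↦ (hf x).ne') hG hθ t (t + T)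
  rw [hGp]
  linarith

end AutonomousODE

noncomputable def thetaVelocity (a x : ℝ) : ℝ := 1 - cos x + (1 + cos x) * a

theorem thetaVelocity_pos {a : ℝ} (ha : 0 < a) (x : ℝ) : 0 < thetaVelocity a x := by
  unfold thetaVelocity
  rcases (neg_one_le_cos x).eq_or_lt with h | h
  · rw [← h]; norm_num
  · nlinarith [cos_le_one x]

theorem thetaVelocity_hasDerivAt (a x : ℝ) :
    HasDerivAt (thetaVelocity a) (sin x * (1 - a)) x :=
  (((hasDerivAt_cos x).const_sub 1).add
    (((hasDerivAt_cos x).const_add 1).mul_const a)).congr_deriv (by ring)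

-- The continuous branch of `s⁻¹ * arctan (s⁻¹ * tan (x / 2))`, the textbook antiderivative of
-- `1 / thetaVelocity (s ^ 2)`, which is discontinuous at the odd multiples of `π`.
noncomputable def thetaTime (s x : ℝ) : ℝ :=
  (x + 2 * arctan ((1 - s) * sin x / thetaVelocity s x)) / (2 * s)

theorem thetaTime_add_two_pi (s x : ℝ) : thetaTime s (x + 2 * π) = thetaTime s x + π / s := by
  simp only [thetaTime, thetaVelocity, sin_add_two_pi, cos_add_two_pi]
  ring

theorem thetaTime_hasDerivAt {s : ℝ} (hs : 0 < s) (x : ℝ) :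
    HasDerivAt (thetaTime s) (thetaVelocity (s ^ 2) x)⁻¹ x := by
  have hD := (thetaVelocity_pos hs x).ne'
  have hF := (thetaVelocity_pos (pow_pos hs 2) x).ne'
  have hnum : HasDerivAt (fun x ↦ (1 - s) * sin x) ((1 - s) * cos x) x :=
    (hasDerivAt_sin x).const_mul _
  have harctan := (hnum.div (thetaVelocity_hasDerivAt s x) hD).arctan
  refine (((hasDerivAt_id x).add (harctan.const_mul 2)).div_const (2 * s)).congr_deriv ?_
  have hsq : 1 + ((1 - s) * sin x / thetaVelocity s x) ^ 2
      = 2 * thetaVelocity (s ^ 2) x / thetaVelocity s x ^ 2 := by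
    rw [div_pow, eq_div_iff (pow_ne_zero 2 hD), add_mul, div_mul_cancel₀ _ (pow_ne_zero 2 hD)]
    unfold thetaVelocity
    linear_combination (1 - s) ^ 2 * sin_sq_add_cos_sq x
  have hquot : (1 - s) * cos x * thetaVelocity s x - (1 - s) * sin x * (sin x * (1 - s))
      = 2 * s - thetaVelocity (s ^ 2) x := by
    unfold thetaVelocity
    linear_combination (-(1 - s) ^ 2) * sin_sq_add_cos_sq x
  simp only [Pi.div_apply]
  rw [hsq, hquot]
  field_simp
  ring

/-- Every global solution of the theta neuron equation
`θ' = 1 - cos θ + (1 + cos θ)·a` with constant input `a > 0` advances by exactly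
`2π` in time `π/√a`: the neuron fires periodically with frequency `√a/π`. -/
theorem theta_neuron_firing_period (a : ℝ) (ha : 0 < a) (θ : ℝ → ℝ)
    (hθ : ∀ t : ℝ,
      HasDerivAt θ (1 - Real.cos (θ t) + (1 + Real.cos (θ t)) * a) t) :
    ∀ t : ℝ, θ (t + Real.pi / Real.sqrt a) = θ t + 2 * Real.pi := by
  have hG : ∀ x, HasDerivAt (thetaTime √a) (thetaVelocity a x)⁻¹ x := by
    simpa only [sq_sqrt ha.le] using thetaTime_hasDerivAt (sqrt_pos.mpr ha)
  exact apply_add_eq_add_of_hasDerivAt_inv (thetaVelocity_pos ha) hG (thetaTime_add_two_pi √a) hθ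
end

section
/- Let ε > 0, set r = √(2ε + ε²) − 1 − ε, and let m ≥ 1 be an integer. Then (1/2π)·∫₀^{2π} [sin θ/(1 + cos θ + ε)]·e^{−imθ} dθ = i·r^m. -/
/-!
For `|r| < 1` the conjugate Poisson kernel `Q_r(θ) = 2 r sin θ / (1 - 2 r cos θ + r²)` is the sum of
two geometric series in `r e^{± iθ}`, i.e. of the absolutely convergent Fourier series
`∑_{k ∈ ℤ} -i sgn(k) r^{|k|} e^{ikθ}`. The number `r = √(2ε + ε²) - 1 - ε` is the root of
`r² + 2(1 + ε) r + 1 = 0` in `(-1, 1)`, and this equation says exactly that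
`1 - 2 r cos θ + r² = -2 r (1 + cos θ + ε)`, so that `q = -Q_r`. Integrating the series termwise
against `e^{-imθ}` (dominated by `∑ |r|^{|k|}`) and using orthogonality of the exponentials gives
the coefficient `i r^m`.
-/

open Complex
open scoped Real

theorem integral_exp_I_mul_intCast (n : ℤ) :
    ∫ θ in (0:ℝ)..2 * π, exp (I * n * θ) = if n = 0 then (2 * π : ℂ) else 0 := by
  split_ifs with hn
  · simp [hn]
  · have hc : I * n ≠ 0 := by simp [hn]
    rw [integral_exp_mul_complex hc, div_eq_zero_iff, sub_eq_zero]
    left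
    push_cast
    rw [mul_zero, exp_zero, show I * n * (2 * π) = n * (2 * π * I) by ring,
      exp_int_mul_two_pi_mul_I]

theorem integral_mul_exp_eq_coeff_of_hasSum {c : ℤ → ℂ} {f : ℝ → ℂ}
    (hf : ∀ θ : ℝ, HasSum (fun k => c k * exp (I * k * θ)) (f θ)) (m : ℤ) :
    1 / (2 * π : ℂ) * ∫ θ in (0:ℝ)..2 * π, f θ * exp (-I * m * θ) = c m := by
  have hc : Summable fun k => ‖c k‖ :=
    summable_norm_iff.mpr <| by simpa using (hf 0).summable
  have hterm (k : ℤ) (θ : ℝ) :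
      c k * exp (I * k * θ) * exp (-I * m * θ) = c k * exp (I * ↑(k - m) * θ) := by
    rw [mul_assoc, ← exp_add]; push_cast; ring_nf
  have hsum : HasSum (fun k => ∫ θ in (0:ℝ)..2 * π, c k * exp (I * ↑(k - m) * θ))
      (∫ θ in (0:ℝ)..2 * π, f θ * exp (-I * m * θ)) := by
    simp only [← hterm]
    refine intervalIntegral.hasSum_integral_of_dominated_convergence (fun k _ => ‖c k‖)
      (fun k => by fun_prop) (fun k => .of_forall fun θ _ => ?_) (.of_forall fun _ _ => hc)
      intervalIntegrable_const (.of_forall fun θ _ => (hf θ).mul_right _)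
    simp [norm_exp]
  simp only [intervalIntegral.integral_const_mul, integral_exp_I_mul_intCast, sub_eq_zero,
    mul_ite, mul_zero] at hsum
  rw [← hsum.tsum_eq, tsum_eq_single m fun k hk => if_neg hk, if_pos rfl]
  field_simp

noncomputable def conjPoissonKernel (r θ : ℝ) : ℝ :=
  2 * r * Real.sin θ / (1 - 2 * r * Real.cos θ + r ^ 2)

theorem hasSum_pow_succ {z : ℂ} (hz : ‖z‖ < 1) :
    HasSum (fun n : ℕ => z ^ (n + 1)) (z / (1 - z)) := by
  simpa [pow_succ', div_eq_mul_inv] using (hasSum_geometric_of_norm_lt_one hz).mul_left z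

theorem div_one_sub_sub_div_one_sub {z w : ℂ} (hz : z ≠ 1) (hw : w ≠ 1) :
    z / (1 - z) - w / (1 - w) = (z - w) / (1 - (z + w) + z * w) := by
  rw [div_sub_div _ _ (sub_ne_zero.mpr hz.symm) (sub_ne_zero.mpr hw.symm)]
  ring_nf

theorem ofReal_conjPoissonKernel {r : ℝ} (hr : |r| < 1) (θ : ℝ) :
    (conjPoissonKernel r θ : ℂ) = -I * (r * exp (θ * I) / (1 - r * exp (θ * I))
      - r * exp (-θ * I) / (1 - r * exp (-θ * I))) := by
  have hne (φ : ℝ) : (r : ℂ) * exp (φ * I) ≠ 1 := fun h => by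
    simpa [norm_exp_ofReal_mul_I, hr.ne] using congrArg norm h
  have hsum : (r : ℂ) * exp (θ * I) + r * exp (-θ * I) = (2 * r * Real.cos θ : ℝ) := by
    push_cast; rw [cos]; ring
  have hdiff : (r : ℂ) * exp (θ * I) - r * exp (-θ * I) = (2 * r * Real.sin θ : ℝ) * I := by
    push_cast; rw [sin]; ring_nf; rw [I_sq]; ring
  have hprod : (r : ℂ) * exp (θ * I) * (r * exp (-θ * I)) = (r ^ 2 : ℝ) := by
    rw [mul_mul_mul_comm, ← exp_add]; push_cast; ring_nf; simp
  rw [div_one_sub_sub_div_one_sub (hne θ) (by simpa using hne (-θ)), hsum, hdiff, hprod,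
    ← mul_div_assoc, conjPoissonKernel]
  push_cast
  ring_nf; rw [I_sq]; ring

theorem hasSum_conjPoissonKernel {r : ℝ} (hr : |r| < 1) (θ : ℝ) :
    HasSum (fun k : ℤ => -I * k.sign * r ^ k.natAbs * exp (I * k * θ))
      (conjPoissonKernel r θ) := by
  have hnorm (φ : ℝ) : ‖(r : ℂ) * exp (φ * I)‖ < 1 := by
    simpa [norm_exp_ofReal_mul_I] using hr
  have h := HasSum.of_add_one_of_neg_add_one
    (f := fun k : ℤ => -I * k.sign * r ^ k.natAbs * exp (I * k * θ))
    (((hasSum_pow_succ (hnorm θ)).mul_left (-I)).congr_fun fun n => ?_)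
    (((hasSum_pow_succ (hnorm (-θ))).mul_left I).congr_fun fun n => ?_)
  · rw [ofReal_conjPoissonKernel hr]
    simpa [mul_sub] using h
  · rw [Int.sign_eq_one_of_pos (by omega), show ((n : ℤ) + 1).natAbs = n + 1 by omega, mul_pow,
      ← exp_nat_mul]
    push_cast; ring_nf
  · rw [Int.sign_eq_neg_one_of_neg (by omega), show (-((n : ℤ) + 1)).natAbs = n + 1 by omega,
      mul_pow, ← exp_nat_mul]
    push_cast; ring_nf

theorem conjPoissonKernel_eq_of_sq_add_mul_add_one_eq_zero {r ε : ℝ}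
    (h : r ^ 2 + 2 * (1 + ε) * r + 1 = 0) (θ : ℝ) :
    conjPoissonKernel r θ = -(Real.sin θ / (1 + Real.cos θ + ε)) := by
  have hr : -2 * r ≠ 0 := fun h0 => by
    simp [show r = 0 by linarith] at h
  rw [conjPoissonKernel,
    show 1 - 2 * r * Real.cos θ + r ^ 2 = -2 * r * (1 + Real.cos θ + ε) by linear_combination h,
    show 2 * r * Real.sin θ = -2 * r * -Real.sin θ by ring, mul_div_mul_left _ _ hr, neg_div]

theorem sqrt_two_mul_add_sq_sub_one_sub_sq_add {ε : ℝ} (hε : 0 ≤ ε) :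
    (√(2 * ε + ε ^ 2) - 1 - ε) ^ 2 + 2 * (1 + ε) * (√(2 * ε + ε ^ 2) - 1 - ε) + 1 = 0 := by
  nlinarith [Real.sq_sqrt (by positivity : 0 ≤ 2 * ε + ε ^ 2)]

theorem abs_sqrt_two_mul_add_sq_sub_one_sub_lt_one {ε : ℝ} (hε : 0 < ε) :
    |√(2 * ε + ε ^ 2) - 1 - ε| < 1 := by
  have hsq := Real.sq_sqrt (by positivity : 0 ≤ 2 * ε + ε ^ 2)
  have hs := Real.sqrt_nonneg (2 * ε + ε ^ 2)
  rw [abs_lt]; constructor <;> nlinarith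

/-- The complex Fourier coefficients of the regularized coupling function
`q(θ) = sin θ/(1 + cos θ + ε)`:
`(1/2π)·∫₀^{2π} q(θ)·e^{-imθ} dθ = i·r^m` with `r = √(2ε+ε²) - 1 - ε`,
for every integer `m ≥ 1`. -/
theorem regularized_coupling_fourier_coefficient (ε : ℝ) (hε : 0 < ε)
    (r : ℝ) (hr : r = Real.sqrt (2 * ε + ε ^ 2) - 1 - ε)
    (m : ℕ) (hm : 1 ≤ m) :
    (1 / (2 * (Real.pi : ℂ))) *
        ∫ θ in (0:ℝ)..(2 * Real.pi),
          ((Real.sin θ / (1 + Real.cos θ + ε) : ℝ) : ℂ) *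
            Complex.exp (-Complex.I * (m : ℂ) * (θ : ℂ))
      = Complex.I * (r : ℂ) ^ m := by
  have hroot : r ^ 2 + 2 * (1 + ε) * r + 1 = 0 := hr ▸ sqrt_two_mul_add_sq_sub_one_sub_sq_add hε.le
  have habs : |r| < 1 := hr ▸ abs_sqrt_two_mul_add_sq_sub_one_sub_lt_one hε
  have hq (θ : ℝ) : HasSum (fun k : ℤ => -(-I * k.sign * r ^ k.natAbs) * exp (I * k * θ))
      ((Real.sin θ / (1 + Real.cos θ + ε) : ℝ) : ℂ) := by
    simpa [conjPoissonKernel_eq_of_sq_add_mul_add_one_eq_zero hroot] using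
      (hasSum_conjPoissonKernel habs θ).neg
  simpa [Int.sign_eq_one_of_pos (by omega : (0 : ℤ) < m)] using
    integral_mul_exp_eq_coeff_of_hasSum hq m
end

section
/- Let ε > 0 and set r = √(2ε + ε²) − 1 − ε (so that −1 < r < 0). Then for every θ ∈ ℝ the series Σ_{m=1}^∞ (i·r^m·e^{imθ} + conj(i·r^m·e^{imθ})) = −2·Σ_{m=1}^∞ r^m·sin(mθ) converges absolutely and its sum equals sin θ/(1 + cos θ + ε). -/
/-!
With `z = r e^{iθ}`, the series is `-2 Σ_{m ≥ 1} Im z^m = -2 Im (z / (1 - z))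
= -2 r sin θ / (1 - 2 r cos θ + r²)`. The number `r` is the root in `(-1, 0)` of
`r² + 2 (1 + ε) r + 1 = 0`, so the denominator equals `-2 r (1 + cos θ + ε)`.
-/

open Complex ComplexConjugate

theorem hasSum_pow_succ_mul_sin {r : ℝ} (hr : |r| < 1) (θ : ℝ) :
    HasSum (fun n : ℕ => r ^ (n + 1) * Real.sin ((n + 1) * θ))
      (r * Real.sin θ / (1 - 2 * r * Real.cos θ + r ^ 2)) := by
  set z : ℂ := r * exp (θ * I)
  have hz : ‖z‖ < 1 := by simpa [z, norm_exp_ofReal_mul_I] using hr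
  have hgeom : HasSum (fun n : ℕ => z ^ (n + 1)) (z / (1 - z)) := by
    simpa [pow_succ', div_eq_mul_inv] using (hasSum_geometric_of_norm_lt_one hz).mul_left z
  have him (n : ℕ) : (z ^ (n + 1)).im = r ^ (n + 1) * Real.sin ((n + 1) * θ) := by
    have : exp (θ * I) ^ (n + 1) = exp (((n + 1) * θ : ℝ) * I) := by
      rw [← exp_nat_mul]; push_cast; ring_nf
    rw [mul_pow, this, ← ofReal_pow, im_ofReal_mul, exp_ofReal_mul_I_im]
  have hval : (z / (1 - z)).im = r * Real.sin θ / (1 - 2 * r * Real.cos θ + r ^ 2) := by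
    have hre : z.re = r * Real.cos θ := by simp [z, exp_ofReal_mul_I_re]
    have him : z.im = r * Real.sin θ := by simp [z, exp_ofReal_mul_I_im]
    rw [div_im, normSq_apply]
    simp only [sub_re, sub_im, one_re, one_im, hre, him]
    rw [← sub_div]
    congr 1
    · ring
    · linear_combination r ^ 2 * Real.sin_sq_add_cos_sq θ
  simpa only [him, hval] using hasSum_im hgeom

theorem I_mul_exp_add_conj (a x : ℝ) :
    I * a * exp (I * x) + conj (I * a * exp (I * x)) = ((-2 * (a * Real.sin x) : ℝ) : ℂ) := by
  rw [add_conj, mul_assoc, I_mul_re, mul_comm I, im_ofReal_mul, exp_ofReal_mul_I_im]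
  congr 1; ring

theorem summable_abs_pow_succ_mul_sin {r : ℝ} (hr : |r| < 1) (θ : ℝ) :
    Summable (fun n : ℕ => |r ^ (n + 1) * Real.sin ((n + 1) * θ)|) := by
  refine .of_nonneg_of_le (fun n => abs_nonneg _) (fun n => ?_)
    ((summable_geometric_of_lt_one (abs_nonneg r) hr).mul_left |r|)
  rw [abs_mul, abs_pow, ← pow_succ']
  exact mul_le_of_le_one_right (pow_nonneg (abs_nonneg r) _) (Real.abs_sin_le_one _)

theorem sq_add_two_mul_one_add_mul_add_one_eq_zero {ε r : ℝ} (hε : 0 ≤ ε)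
    (hr : r = √(2 * ε + ε ^ 2) - 1 - ε) : r ^ 2 + 2 * (1 + ε) * r + 1 = 0 := by
  have hsq : √(2 * ε + ε ^ 2) ^ 2 = 2 * ε + ε ^ 2 := Real.sq_sqrt (by positivity)
  subst hr
  linear_combination hsq

theorem neg_one_lt_and_neg_of_eq_sqrt {ε r : ℝ} (hε : 0 < ε)
    (hr : r = √(2 * ε + ε ^ 2) - 1 - ε) : -1 < r ∧ r < 0 := by
  have hlt : ε < √(2 * ε + ε ^ 2) := Real.lt_sqrt_of_sq_lt (by nlinarith)
  have hgt : √(2 * ε + ε ^ 2) < 1 + ε := (Real.sqrt_lt' (by positivity)).2 (by nlinarith)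
  constructor <;> linarith

theorem hasSum_regularized_coupling {ε r : ℝ} (hε : 0 < ε)
    (hr : r = √(2 * ε + ε ^ 2) - 1 - ε) (θ : ℝ) :
    HasSum (fun n : ℕ => -2 * (r ^ (n + 1) * Real.sin ((n + 1) * θ)))
      (Real.sin θ / (1 + Real.cos θ + ε)) := by
  obtain ⟨hr₁, hr₀⟩ := neg_one_lt_and_neg_of_eq_sqrt hε hr
  have hden : 1 - 2 * r * Real.cos θ + r ^ 2 = -2 * r * (1 + Real.cos θ + ε) := by
    linear_combination sq_add_two_mul_one_add_mul_add_one_eq_zero hε.le hr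
  have h := (hasSum_pow_succ_mul_sin (abs_lt.2 ⟨hr₁, by linarith⟩) θ).mul_left (-2)
  rwa [hden, show -2 * (r * Real.sin θ / (-2 * r * (1 + Real.cos θ + ε)))
    = Real.sin θ / (1 + Real.cos θ + ε) by field_simp [hr₀.ne]] at h

/-- With `r = √(2ε+ε²) - 1 - ε`, the Fourier series
`Σ_{m≥1} (i r^m e^{imθ} + c.c.) = -2 Σ_{m≥1} r^m sin(mθ)` converges absolutely
and sums to the regularized coupling function `sin θ/(1 + cos θ + ε)`. -/
theorem regularized_coupling_fourier_series (ε : ℝ) (hε : 0 < ε)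
    (r : ℝ) (hr : r = Real.sqrt (2 * ε + ε ^ 2) - 1 - ε) (θ : ℝ) :
    Summable (fun m : ℕ =>
      ‖Complex.I * (r : ℂ) ^ (m + 1) * Complex.exp (Complex.I * ((m : ℂ) + 1) * (θ : ℂ))
        + starRingEnd ℂ
            (Complex.I * (r : ℂ) ^ (m + 1) *
              Complex.exp (Complex.I * ((m : ℂ) + 1) * (θ : ℂ)))‖)
    ∧ ∑' m : ℕ,
        (Complex.I * (r : ℂ) ^ (m + 1) * Complex.exp (Complex.I * ((m : ℂ) + 1) * (θ : ℂ))
          + starRingEnd ℂ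
              (Complex.I * (r : ℂ) ^ (m + 1) *
                Complex.exp (Complex.I * ((m : ℂ) + 1) * (θ : ℂ))))
      = ((Real.sin θ / (1 + Real.cos θ + ε) : ℝ) : ℂ)
    ∧ (-2 : ℝ) * ∑' m : ℕ, r ^ (m + 1) * Real.sin ((m + 1) * θ)
      = Real.sin θ / (1 + Real.cos θ + ε) := by
  obtain ⟨hr₁, hr₀⟩ := neg_one_lt_and_neg_of_eq_sqrt hε hr
  have hsum := hasSum_regularized_coupling hε hr θ
  have hterm (m : ℕ) :
      I * (r : ℂ) ^ (m + 1) * exp (I * ((m : ℂ) + 1) * θ)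
        + conj (I * (r : ℂ) ^ (m + 1) * exp (I * ((m : ℂ) + 1) * θ))
      = ((-2 * (r ^ (m + 1) * Real.sin ((m + 1) * θ)) : ℝ) : ℂ) := by
    rw [show I * ((m : ℂ) + 1) * θ = I * (((m + 1) * θ : ℝ) : ℂ) by push_cast; ring, ← ofReal_pow]
    exact I_mul_exp_add_conj _ _
  simp only [hterm, norm_real, Real.norm_eq_abs]
  refine ⟨?_, by rw [← ofReal_tsum, hsum.tsum_eq], by rw [← tsum_mul_left, hsum.tsum_eq]⟩
  simpa only [abs_mul, abs_neg, abs_two] using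
    (summable_abs_pow_succ_mul_sin (abs_lt.2 ⟨hr₁, by linarith⟩) θ).mul_left 2
end

section
/- Let η₀, Δ, g ∈ ℝ, let T : I → ℝ be a real-valued function on an interval I, and let b : I → ℂ be differentiable with 1 + b(t) ≠ 0 for all t, satisfying ∂b/∂t = [(iη₀ − Δ)(1+b)² − i(1−b)²]/2 + [i·(1+b)²·g·T + g·(1−b²)]/2. Then w(t) := (1 − conj(b(t)))/(1 + conj(b(t))) is differentiable and satisfies ∂w/∂t = iη₀ + Δ − i·w² + i·g·T − g·w. -/
/-!
The Cayley transform `w = (1 - c)/(1 + c)` carries a Riccati equation for `c` to a Riccati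
equation for `w`: since `w' = -2 c'/(1 + c)²`, the quadratic terms `(1 + c)²`, `(1 - c)²` and
`1 - c²` of `c'` become `1`, `w²` and `w`. Applied to `c = conj b`, whose equation is the
conjugate of the one for `b`, this gives the equation for `w`.
-/

open Complex ComplexConjugate

section CayleyTransform

variable {𝕜 𝕜' : Type*} [NontriviallyNormedField 𝕜] [NontriviallyNormedField 𝕜']
  [NormedAlgebra 𝕜 𝕜']

theorem HasDerivAt.one_sub_div_one_add {f : 𝕜 → 𝕜'} {f' : 𝕜'} {t : 𝕜}
    (hf : HasDerivAt f f' t) (ht : 1 + f t ≠ 0) :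
    HasDerivAt (fun τ => (1 - f τ) / (1 + f τ)) (-2 * f' / (1 + f t) ^ 2) t := by
  refine (((hasDerivAt_const t 1).sub hf).div ((hasDerivAt_const t 1).add hf) ht).congr_deriv ?_
  simp only [Pi.add_apply, Pi.sub_apply]
  ring

theorem HasDerivAt.one_sub_div_one_add_of_riccati [CharZero 𝕜'] {f : 𝕜 → 𝕜'} {t : 𝕜}
    {α β γ : 𝕜'}
    (hf : HasDerivAt f ((-α * (1 + f t) ^ 2 + β * (1 - f t) ^ 2 + γ * (1 - f t ^ 2)) / 2) t)
    (ht : 1 + f t ≠ 0) :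
    HasDerivAt (fun τ => (1 - f τ) / (1 + f τ))
      (α - β * ((1 - f t) / (1 + f t)) ^ 2 - γ * ((1 - f t) / (1 + f t))) t := by
  refine (hf.one_sub_div_one_add ht).congr_deriv ?_
  field_simp
  ring

end CayleyTransform

/-- If the Ott/Antonsen order parameter `b` of a gap-junction coupled network
satisfies `∂b/∂t = [(iη₀ - Δ)(1+b)² - i(1-b)²]/2 + [i(1+b)²gT + g(1-b²)]/2`, then
`w = (1 - conj b)/(1 + conj b)` satisfies `∂w/∂t = iη₀ + Δ - iw² + igT - gw`. -/
theorem w_equation_from_b_equation (η₀ Δ g : ℝ) (s : Set ℝ)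
    (T : ℝ → ℝ) (b : ℝ → ℂ)
    (hb1 : ∀ t ∈ s, 1 + b t ≠ 0)
    (hb : ∀ t ∈ s,
      HasDerivAt b
        (((Complex.I * (η₀ : ℂ) - (Δ : ℂ)) * (1 + b t) ^ 2
            - Complex.I * (1 - b t) ^ 2) / 2
          + (Complex.I * (1 + b t) ^ 2 * (g : ℂ) * (T t : ℂ)
              + (g : ℂ) * (1 - (b t) ^ 2)) / 2) t) :
    ∀ t ∈ s,
      HasDerivAt
        (fun τ => (1 - starRingEnd ℂ (b τ)) / (1 + starRingEnd ℂ (b τ)))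
        (Complex.I * (η₀ : ℂ) + (Δ : ℂ)
          - Complex.I *
              ((1 - starRingEnd ℂ (b t)) / (1 + starRingEnd ℂ (b t))) ^ 2
          + Complex.I * (g : ℂ) * (T t : ℂ)
          - (g : ℂ) * ((1 - starRingEnd ℂ (b t)) / (1 + starRingEnd ℂ (b t)))) t := by
  intro t ht
  have hconj_ne : 1 + conj (b t) ≠ 0 := by
    rw [← map_one (starRingEnd ℂ), ← map_add, map_ne_zero]
    exact hb1 t ht
  have hconj : HasDerivAt (fun τ => conj (b τ))
      ((-(I * η₀ + Δ + I * g * T t) * (1 + conj (b t)) ^ 2 + I * (1 - conj (b t)) ^ 2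
        + g * (1 - conj (b t) ^ 2)) / 2) t := by
    refine (hb t ht).star.congr_deriv ?_
    simp only [Complex.star_def, map_add, map_sub, map_mul, map_div₀, map_pow, map_one, map_ofNat,
      conj_I, conj_ofReal]
    ring
  refine (hconj.one_sub_div_one_add_of_riccati hconj_ne).congr_deriv ?_
  ring
end

section
/- Let Δ > 0 and η₀ ∈ ℝ, and let F : {z ∈ ℂ : Im z ≥ 0} → ℂ be continuous, bounded, and holomorphic on the open upper half-plane {Im z > 0}. Then ∫_{−∞}^{∞} [ (Δ/π) / ((η − η₀)² + Δ²) ]·F(η) dη = F(η₀ + iΔ). (Integration of a boundary-regular bounded holomorphic function against the Lorentzian density g(η) = (Δ/π)/((η−η₀)² + Δ²) evaluates it at the pole η₀ + iΔ in the upper half-plane.) -/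
/-!
Put `w = x₀ + γ i`. The function `H z = (γ/π) (F z - F w) / ((z - w)(z - w̄))` is holomorphic in
the open upper half-plane (the singularity at `w` is removable), continuous up to the real axis,
and `O(1/|z|²)` at infinity there. Since `(x - w)(x - w̄) = (x - x₀)² + γ²`, on the real axis
`H x` is the Cauchy density times `F x - F w`. By Cauchy–Goursat on the rectangles
`[-R, R] × [0, R]`, the integral of `H` over `[-R, R]` equals the integral over the three other
sides, which is `O(R · sup_{|z| ≥ R} ‖H z‖) → 0`. Hence `∫ H = 0`, i.e. `∫ g F = F w ∫ g = F w`.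
-/

open MeasureTheory Complex Set Filter Topology Bornology ProbabilityTheory
open scoped NNReal Real

variable {E : Type*} [NormedAddCommGroup E] [NormedSpace ℂ E]

section HalfPlane

variable {H : ℂ → E}

theorem norm_intervalIntegral_le_of_upperHalfPlane
    (hc : ContinuousOn H {z | 0 ≤ z.im}) (hd : DifferentiableOn ℂ H {z | 0 < z.im})
    {R M : ℝ} (hR : 0 ≤ R) (hM : ∀ z : ℂ, 0 ≤ z.im → R ≤ ‖z‖ → ‖H z‖ ≤ M) :
    ‖∫ x in -R..R, H x‖ ≤ 4 * R * M := by
  have rect := integral_boundary_rect_eq_zero_of_continuousOn_of_differentiableOn H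
    (-R) (R + R * I)
    (hc.mono fun z hz => (show z.im ∈ Icc 0 R by simpa [uIcc_of_le hR] using hz.2).1)
    (hd.mono fun z hz => (show z.im ∈ Ioo 0 R by simpa [hR] using hz.2).1)
  simp only [ofReal_neg, neg_re, ofReal_re, add_re, mul_re, I_re, I_im, ofReal_im, neg_im, add_im,
    mul_im, mul_zero, mul_one, sub_zero, add_zero, zero_add, neg_zero, ofReal_zero, zero_mul] at rect
  have hsplit : ∫ x in -R..R, H x = (∫ x in -R..R, H (x + R * I))
      - I • (∫ y in 0..R, H (R + y * I)) + I • (∫ y in 0..R, H (-R + y * I)) := by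
    rw [← sub_eq_zero, ← rect]; abel
  have top : ‖∫ x in -R..R, H (x + R * I)‖ ≤ M * |R - -R| :=
    intervalIntegral.norm_integral_le_of_norm_le_const fun x _ =>
      hM _ (by simpa using hR) (by simpa [abs_of_nonneg hR] using abs_im_le_norm (x + R * I))
  have right : ‖∫ y in 0..R, H (R + y * I)‖ ≤ M * |R - 0| :=
    intervalIntegral.norm_integral_le_of_norm_le_const fun y hy => by
      rw [uIoc_of_le hR] at hy
      exact hM _ (by simpa using hy.1.le)
        (by simpa [abs_of_nonneg hR] using abs_re_le_norm (R + y * I))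
  have left : ‖∫ y in 0..R, H (-R + y * I)‖ ≤ M * |R - 0| :=
    intervalIntegral.norm_integral_le_of_norm_le_const fun y hy => by
      rw [uIoc_of_le hR] at hy
      exact hM _ (by simpa using hy.1.le)
        (by simpa [abs_of_nonneg hR] using abs_re_le_norm (-R + y * I))
  calc ‖∫ x in -R..R, H x‖
      ≤ ‖∫ x in -R..R, H (x + R * I)‖ + ‖∫ y in 0..R, H (R + y * I)‖
        + ‖∫ y in 0..R, H (-R + y * I)‖ := by
        rw [hsplit]
        refine (norm_add_le _ _).trans (add_le_add ((norm_sub_le _ _).trans ?_) ?_) <;>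
          simp [norm_smul]
    _ ≤ M * |R - -R| + M * |R - 0| + M * |R - 0| := by gcongr
    _ = 4 * R * M := by
        rw [sub_neg_eq_add, sub_zero, abs_of_nonneg (by linarith), abs_of_nonneg hR]; ring

theorem integral_eq_zero_of_upperHalfPlane [CompleteSpace E]
    (hc : ContinuousOn H {z | 0 ≤ z.im}) (hd : DifferentiableOn ℂ H {z | 0 < z.im})
    (hint : Integrable fun x : ℝ => H x)
    (hdecay : Tendsto (fun z => z • H z) (cobounded ℂ ⊓ 𝓟 {z | 0 ≤ z.im}) (𝓝 0)) :
    ∫ x : ℝ, H x = 0 := by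
  refine tendsto_nhds_unique
    (intervalIntegral_tendsto_integral hint tendsto_neg_atTop_atBot tendsto_id) ?_
  rw [NormedAddGroup.tendsto_nhds_zero] at hdecay ⊢
  intro ε hε
  obtain ⟨R₀, -, hR₀⟩ := hasBasis_cobounded_norm.eventually_iff.1
    (eventually_inf_principal.1 (hdecay (ε / 8) (by positivity)))
  filter_upwards [eventually_ge_atTop (max R₀ 1)] with R hR
  have hRpos : 0 < R := lt_of_lt_of_le one_pos (le_of_max_le_right hR)
  calc ‖∫ x in -R..R, H x‖ ≤ 4 * R * (ε / 8 / R) := by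
        refine norm_intervalIntegral_le_of_upperHalfPlane hc hd hRpos.le fun z hz hRz => ?_
        rw [le_div_iff₀ hRpos]
        calc ‖H z‖ * R ≤ ‖H z‖ * ‖z‖ := by gcongr
          _ = ‖z • H z‖ := by rw [norm_smul, mul_comm]
          _ ≤ ε / 8 := (hR₀ ((le_of_max_le_left hR).trans hRz) hz).le
    _ < ε := by field_simp; linarith

end HalfPlane

section CauchyDensity

/-- `(γ/π) (F z - F w) / ((z - w)(z - w̄))` with `w = x₀ + γ i`, the removable singularity at `w`
being filled in by `dslope`. -/
noncomputable def cauchySlope (F : ℂ → E) (x₀ : ℝ) (γ : ℝ≥0) (z : ℂ) : E :=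
  ((γ / π : ℂ) * (z - (x₀ - γ * I))⁻¹) • dslope F (x₀ + γ * I) z

variable {F : ℂ → E} {x₀ : ℝ} {γ : ℝ≥0}

lemma ofReal_cauchyPDFReal (x : ℝ) :
    (cauchyPDFReal x₀ γ x : ℂ) = γ / π * ((x - (x₀ - γ * I))⁻¹ * (x - (x₀ + γ * I))⁻¹) := by
  have h : ((x : ℂ) - (x₀ - γ * I)) * (x - (x₀ + γ * I)) = (x - x₀) ^ 2 + γ ^ 2 := by
    linear_combination (-(γ : ℂ) ^ 2) * I_sq
  rw [cauchyPDFReal_def, ← mul_inv, h]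
  push_cast
  ring

lemma cauchySlope_ofReal (hγ : γ ≠ 0) (x : ℝ) :
    cauchySlope F x₀ γ x = cauchyPDFReal x₀ γ x • (F x - F (x₀ + γ * I)) := by
  have hx : (x : ℂ) ≠ x₀ + γ * I := fun h => hγ (by simpa using (congrArg im h).symm)
  rw [cauchySlope, dslope_of_ne _ hx, slope_def_module, smul_smul, ← coe_smul,
    ofReal_cauchyPDFReal, mul_assoc]

lemma setOf_im_pos_mem_nhds_pole (hγ : γ ≠ 0) : {z : ℂ | 0 < z.im} ∈ 𝓝 ((x₀ : ℂ) + γ * I) :=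
  (isOpen_lt continuous_const continuous_im).mem_nhds (by simpa using pos_iff_ne_zero.2 hγ)

lemma sub_conj_pole_ne_zero (hγ : γ ≠ 0) {z : ℂ} (hz : 0 ≤ z.im) : z - (x₀ - γ * I) ≠ 0 := by
  intro h
  have him := congrArg im h
  simp only [sub_im, ofReal_im, mul_im, ofReal_re, I_im, mul_one, I_re, mul_zero, add_zero,
    zero_sub, sub_neg_eq_add, zero_im] at him
  have : (0 : ℝ) < γ := NNReal.coe_pos.2 (pos_iff_ne_zero.2 hγ)
  linarith

lemma differentiableOn_cauchySlope [CompleteSpace E] (hγ : γ ≠ 0)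
    (hd : DifferentiableOn ℂ F {z | 0 < z.im}) :
    DifferentiableOn ℂ (cauchySlope F x₀ γ) {z | 0 < z.im} := by
  refine DifferentiableOn.smul ?_ ((differentiableOn_dslope (setOf_im_pos_mem_nhds_pole hγ)).2 hd)
  exact (differentiableOn_const _).mul
    ((differentiableOn_id.sub_const _).inv fun z hz => sub_conj_pole_ne_zero hγ (le_of_lt hz))

lemma continuousOn_cauchySlope (hγ : γ ≠ 0) (hc : ContinuousOn F {z | 0 ≤ z.im})
    (hd : DifferentiableOn ℂ F {z | 0 < z.im}) :
    ContinuousOn (cauchySlope F x₀ γ) {z | 0 ≤ z.im} := by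
  have hnhds := setOf_im_pos_mem_nhds_pole (x₀ := x₀) hγ
  refine ContinuousOn.smul ?_ ((continuousOn_dslope (s := {z | 0 ≤ z.im})
    (mem_of_superset hnhds fun z hz => le_of_lt hz)).2 ⟨hc, hd.differentiableAt hnhds⟩)
  exact continuousOn_const.mul
    ((continuousOn_id.sub continuousOn_const).inv₀ fun z hz => sub_conj_pole_ne_zero hγ hz)

lemma tendsto_smul_cauchySlope {C : ℝ} (hC : ∀ z : ℂ, 0 ≤ z.im → ‖F z‖ ≤ C) :
    Tendsto (fun z => z • cauchySlope F x₀ γ z) (cobounded ℂ ⊓ 𝓟 {z | 0 ≤ z.im}) (𝓝 0) := by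
  refine squeeze_zero_norm' (a := fun z => 8 * (γ / π) * C / ‖z‖) ?_
    ((tendsto_const_nhds.div_atTop tendsto_norm_cobounded_atTop).mono_left inf_le_left)
  filter_upwards [(eventually_cobounded_le_norm (2 * (|x₀| + γ) + 1)).filter_mono inf_le_left,
    mem_inf_of_right (mem_principal_self _)] with z hz hzim
  have hw : ‖(x₀ : ℂ) + γ * I‖ ≤ |x₀| + γ := (norm_add_le _ _).trans (by simp)
  have hw' : ‖(x₀ : ℂ) - γ * I‖ ≤ |x₀| + γ := (norm_sub_le _ _).trans (by simp)
  have hz0 : 0 < ‖z‖ := by linarith [abs_nonneg x₀, γ.2]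
  have hzw : ‖z‖ / 2 ≤ ‖z - (x₀ + γ * I)‖ := by linarith [norm_sub_norm_le z (x₀ + γ * I)]
  have hzw' : ‖z‖ / 2 ≤ ‖z - (x₀ - γ * I)‖ := by linarith [norm_sub_norm_le z (x₀ - γ * I)]
  have hne : z ≠ x₀ + γ * I := sub_ne_zero.1 (norm_pos_iff.1 (by linarith))
  have hF : ‖F z - F (x₀ + γ * I)‖ ≤ 2 * C := by
    linarith [norm_sub_le (F z) (F (x₀ + γ * I)), hC z hzim, hC (x₀ + γ * I) (by simp)]
  calc ‖z • cauchySlope F x₀ γ z‖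
      = ‖z‖ * (γ / π) * ‖z - (x₀ - γ * I)‖⁻¹ *
          (‖z - (x₀ + γ * I)‖⁻¹ * ‖F z - F (x₀ + γ * I)‖) := by
        rw [cauchySlope, dslope_of_ne _ hne, slope_def_module]
        simp [norm_smul, abs_of_nonneg Real.pi_pos.le, mul_assoc]
    _ ≤ ‖z‖ * (γ / π) * (‖z‖ / 2)⁻¹ * ((‖z‖ / 2)⁻¹ * (2 * C)) := by gcongr
    _ = 8 * (γ / π) * C / ‖z‖ := by field_simp; ring

theorem integral_cauchyPDFReal_smul [CompleteSpace E] (hγ : γ ≠ 0)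
    (hc : ContinuousOn F {z | 0 ≤ z.im}) (hd : DifferentiableOn ℂ F {z | 0 < z.im})
    {C : ℝ} (hC : ∀ z : ℂ, 0 ≤ z.im → ‖F z‖ ≤ C) :
    ∫ x, cauchyPDFReal x₀ γ x • F x = F (x₀ + γ * I) := by
  have hF : Integrable fun x : ℝ => cauchyPDFReal x₀ γ x • F x :=
    (integrable_cauchyPDFReal x₀).smul_bdd C
      (hc.comp_continuous continuous_ofReal fun x => by simp).aestronglyMeasurable
      (ae_of_all _ fun x => hC x (by simp))
  have hFw : Integrable fun x : ℝ => cauchyPDFReal x₀ γ x • F (x₀ + γ * I) :=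
    (integrable_cauchyPDFReal x₀).smul_const _
  have hslope : ∫ x : ℝ, cauchySlope F x₀ γ x = 0 := by
    refine integral_eq_zero_of_upperHalfPlane (continuousOn_cauchySlope hγ hc hd)
      (differentiableOn_cauchySlope hγ hd) ?_ (tendsto_smul_cauchySlope hC)
    simp_rw [cauchySlope_ofReal hγ, smul_sub]
    exact hF.sub hFw
  simp_rw [cauchySlope_ofReal hγ, smul_sub] at hslope
  rwa [integral_sub hF hFw, integral_smul_const, integral_cauchyPDFReal_eq_one x₀ hγ, one_smul,
    sub_eq_zero] at hslope

end CauchyDensity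

open MeasureTheory in
/-- Integrating a bounded function, continuous on the closed upper half-plane and
holomorphic on the open upper half-plane, against the Lorentzian density
`g(η) = (Δ/π)/((η-η₀)² + Δ²)` evaluates it at the pole `η₀ + iΔ`. -/
theorem lorentzian_average_evaluates_at_pole (Δ η₀ : ℝ) (hΔ : 0 < Δ)
    (F : ℂ → ℂ)
    (hFcont : ContinuousOn F {z : ℂ | 0 ≤ z.im})
    (hFbdd : ∃ C : ℝ, ∀ z : ℂ, 0 ≤ z.im → ‖F z‖ ≤ C)
    (hFhol : DifferentiableOn ℂ F {z : ℂ | 0 < z.im}) :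
    ∫ η : ℝ, ((Δ / Real.pi) / ((η - η₀) ^ 2 + Δ ^ 2)) • F (η : ℂ)
      = F ((η₀ : ℂ) + (Δ : ℂ) * Complex.I) := by
  obtain ⟨C, hC⟩ := hFbdd
  have hγ : Δ.toNNReal ≠ 0 := by simpa using hΔ
  have hdensity (η : ℝ) : (Δ / π) / ((η - η₀) ^ 2 + Δ ^ 2) = cauchyPDFReal η₀ Δ.toNNReal η := by
    rw [cauchyPDFReal_def, Real.coe_toNNReal _ hΔ.le]
    ring
  simpa only [hdensity, Real.coe_toNNReal _ hΔ.le] using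
    integral_cauchyPDFReal_smul hγ hFcont hFhol hC
end
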